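/- With notation as in the context, there exists a real number L such that R·C = L·Q(g,R) (equality of (0,6)-tensors) if and only if μ = 0, or a = 0, b = 0 and c² + k̃ = 0; and in the latter case R·C = 0. In particular, if k̃ > 0 then such an L exists if and only if μ = 0. (This is the pointwise algebraic form of the theorem characterizing Wintgen ideal submanifolds whose tensors R·C and Q(g,R) are linearly dependent.) -/

import Mathlib

/-!
Write `P`, `S`, `D` for the forms `x₁y₁ + x₂y₂`, `x₁y₂ + x₂y₁`, `x₁y₁ - x₂y₂` of the plane
`span(E₁, E₂)`. The Gauss equation gives
`R = ½(H² + k̃) g∧g + aμ g∧S + bμ g∧D - μ² P∧P`, and the Weyl tensor is `C = -μ² W`, where `W` is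
the Weyl tensor of `P∧P`. The curvature operators and the operators `X ∧_g Y` are skew, so they
annihilate `g`, and the Leibniz rule for the Kulkarni–Nomizu product reduces `R·C` to
`-2μ² (R·P)∧(P - g/(n-2))`. The form `R·P` is built from `(H² + k̃)P + aμS + bμD` alone, so
`R·C = 0` when `μ = 0` or when `a = b = c² + k̃ = 0`. Conversely, if `μ ≠ 0` and
`R·C = L·Q(g,R)`, evaluating on basis vectors gives `aμ³ = 0` and `L = H² + k̃ ± bμ`, hence
`b = 0`, and finally `(c² + k̃)μ² = 0`.
-/

noncomputable section

namespace Wintgen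

/-- The standard inner product `g` on `ℝ^n`. -/
def gg (n : ℕ) (x y : Fin n → ℝ) : ℝ := ∑ i, x i * y i

/-- The standard orthonormal basis vectors `E_i` (0-indexed). -/
def E (n : ℕ) (i : Fin n) : Fin n → ℝ := fun j => if j = i then 1 else 0

/-- Auxiliary: the `j`-th coordinate of `x` (0 if out of range). -/
def coord (n : ℕ) (x : Fin n → ℝ) (j : ℕ) : ℝ := if h : j < n then x ⟨j, h⟩ else 0

/-- The Choi–Lu shape operator `A_1`. -/
def A1 (n : ℕ) (a μ : ℝ) (x : Fin n → ℝ) : Fin n → ℝ := fun i =>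
  if (i : ℕ) = 0 then a * x i + μ * coord n x 1
  else if (i : ℕ) = 1 then μ * coord n x 0 + a * x i
  else a * x i

/-- The Choi–Lu shape operator `A_2`. -/
def A2 (n : ℕ) (b μ : ℝ) (x : Fin n → ℝ) : Fin n → ℝ := fun i =>
  if (i : ℕ) = 0 then (b + μ) * x i
  else if (i : ℕ) = 1 then (b - μ) * x i
  else b * x i

/-- The Choi–Lu shape operator `A_3 = c • id`. -/
def A3 (n : ℕ) (c : ℝ) (x : Fin n → ℝ) : Fin n → ℝ := fun i => c * x i

/-- The Gauss-equation curvature tensor `R`. -/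
def Rt (n : ℕ) (a b c μ k : ℝ) (X Y Z W : Fin n → ℝ) : ℝ :=
  (gg n (A1 n a μ X) W * gg n (A1 n a μ Y) Z - gg n (A1 n a μ X) Z * gg n (A1 n a μ Y) W)
  + (gg n (A2 n b μ X) W * gg n (A2 n b μ Y) Z - gg n (A2 n b μ X) Z * gg n (A2 n b μ Y) W)
  + (gg n (A3 n c X) W * gg n (A3 n c Y) Z - gg n (A3 n c X) Z * gg n (A3 n c Y) W)
  + k * (gg n X W * gg n Y Z - gg n X Z * gg n Y W)

/-- The Ricci tensor `Ricc(X,Y) = ∑ i, R(E_i, X, Y, E_i)`. -/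
def Ricc (n : ℕ) (a b c μ k : ℝ) (X Y : Fin n → ℝ) : ℝ :=
  ∑ i, Rt n a b c μ k (E n i) X Y (E n i)

/-- The scalar curvature `τ`. -/
def tau (n : ℕ) (a b c μ k : ℝ) : ℝ := ∑ i, Ricc n a b c μ k (E n i) (E n i)

/-- The Kulkarni–Nomizu product of two bilinear forms. -/
def KN (n : ℕ) (A B : (Fin n → ℝ) → (Fin n → ℝ) → ℝ) (X1 X2 X3 X4 : Fin n → ℝ) : ℝ :=
  A X1 X4 * B X2 X3 + A X2 X3 * B X1 X4 - A X1 X3 * B X2 X4 - A X2 X4 * B X1 X3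

/-- The Weyl conformal curvature tensor `C`. -/
def Ct (n : ℕ) (a b c μ k : ℝ) (X Y Z W : Fin n → ℝ) : ℝ :=
  Rt n a b c μ k X Y Z W
    - (1 / ((n : ℝ) - 2)) * KN n (gg n) (Ricc n a b c μ k) X Y Z W
    + (tau n a b c μ k / (2 * ((n : ℝ) - 1) * ((n : ℝ) - 2))) * KN n (gg n) (gg n) X Y Z W

/-- The endomorphism `(X ∧_A Y)` applied to `Z`. -/
def wedge (n : ℕ) (A : (Fin n → ℝ) → (Fin n → ℝ) → ℝ) (X Y Z : Fin n → ℝ) : Fin n → ℝ :=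
  fun j => A Y Z * X j - A X Z * Y j

/-- The endomorphism determined by `g(Op(X,Y)Z, W) = T(X,Y,Z,W)`:
its `j`-th component is `T(X,Y,Z,E_j)`. -/
def curvOp (n : ℕ) (T : (Fin n → ℝ) → (Fin n → ℝ) → (Fin n → ℝ) → (Fin n → ℝ) → ℝ)
    (X Y Z : Fin n → ℝ) : Fin n → ℝ := fun j => T X Y Z (E n j)

/-- Derivation-type action of a family of operators on a (0,4)-tensor. -/
def dotT (n : ℕ) (Op : (Fin n → ℝ) → (Fin n → ℝ) → (Fin n → ℝ) → (Fin n → ℝ))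
    (T : (Fin n → ℝ) → (Fin n → ℝ) → (Fin n → ℝ) → (Fin n → ℝ) → ℝ)
    (X1 X2 X3 X4 X Y : Fin n → ℝ) : ℝ :=
  - T (Op X Y X1) X2 X3 X4 - T X1 (Op X Y X2) X3 X4
  - T X1 X2 (Op X Y X3) X4 - T X1 X2 X3 (Op X Y X4)

/-- The (0,6)-tensor `R · C`. -/
def RC (n : ℕ) (a b c μ k : ℝ) :=
  dotT n (fun X Y => curvOp n (Rt n a b c μ k) X Y) (Ct n a b c μ k)

/-- The (0,6)-tensor `C · R`. -/
def CR (n : ℕ) (a b c μ k : ℝ) :=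
  dotT n (fun X Y => curvOp n (Ct n a b c μ k) X Y) (Rt n a b c μ k)

/-- The Tachibana tensor `Q(A, T)`. -/
def Q (n : ℕ) (A : (Fin n → ℝ) → (Fin n → ℝ) → ℝ)
    (T : (Fin n → ℝ) → (Fin n → ℝ) → (Fin n → ℝ) → (Fin n → ℝ) → ℝ) :=
  dotT n (fun X Y => wedge n A X Y) T

section Tensors
variable {n : ℕ}

def derivForm (F : (Fin n → ℝ) → Fin n → ℝ) (A : (Fin n → ℝ) → (Fin n → ℝ) → ℝ) :
    (Fin n → ℝ) → (Fin n → ℝ) → ℝ :=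
  fun Z W => -A (F Z) W - A Z (F W)

variable (Op : (Fin n → ℝ) → (Fin n → ℝ) → (Fin n → ℝ) → Fin n → ℝ)
  (T T' : (Fin n → ℝ) → (Fin n → ℝ) → (Fin n → ℝ) → (Fin n → ℝ) → ℝ)

lemma dotT_add : dotT n Op (T + T') = dotT n Op T + dotT n Op T' := by
  funext X1 X2 X3 X4 X Y
  simp only [dotT, Pi.add_apply]
  ring

lemma dotT_sub : dotT n Op (T - T') = dotT n Op T - dotT n Op T' := by
  funext X1 X2 X3 X4 X Y
  simp only [dotT, Pi.sub_apply]
  ring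

lemma dotT_smul (s : ℝ) : dotT n Op (s • T) = s • dotT n Op T := by
  funext X1 X2 X3 X4 X Y
  simp only [dotT, Pi.smul_apply, smul_eq_mul]
  ring

lemma dotT_KN (A B : (Fin n → ℝ) → (Fin n → ℝ) → ℝ) :
    dotT n Op (KN n A B) = fun X1 X2 X3 X4 X Y =>
      KN n (derivForm (Op X Y) A) B X1 X2 X3 X4 + KN n A (derivForm (Op X Y) B) X1 X2 X3 X4 := by
  funext X1 X2 X3 X4 X Y
  simp only [dotT, KN, derivForm]
  ring

end Tensors

section Basis
variable {n : ℕ}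

lemma gg_comm (X Y : Fin n → ℝ) : gg n X Y = gg n Y X :=
  dotProduct_comm X Y

lemma gg_add_left (U V W : Fin n → ℝ) : gg n (U + V) W = gg n U W + gg n V W :=
  add_dotProduct U V W

lemma gg_smul_left (s : ℝ) (V W : Fin n → ℝ) : gg n (s • V) W = s * gg n V W :=
  smul_dotProduct s V W

lemma gg_E_right (X : Fin n → ℝ) (j : Fin n) : gg n X (E n j) = X j := by
  simp [gg, E]

lemma gg_E_left (X : Fin n → ℝ) (j : Fin n) : gg n (E n j) X = X j := by
  rw [gg_comm, gg_E_right]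

lemma gg_wedge_left (A : (Fin n → ℝ) → (Fin n → ℝ) → ℝ) (X Y Z W : Fin n → ℝ) :
    gg n (wedge n A X Y Z) W = A Y Z * gg n X W - A X Z * gg n Y W := by
  simp only [gg, wedge, Finset.mul_sum, ← Finset.sum_sub_distrib]
  exact Finset.sum_congr rfl fun j _ => by ring

lemma coord_of_lt {m : ℕ} (h : m < n) (X : Fin n → ℝ) : coord n X m = X ⟨m, h⟩ := dif_pos h

lemma coord_E {m : ℕ} (h : m < n) (i : Fin n) :
    coord n (E n i) m = if i = ⟨m, h⟩ then 1 else 0 := by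
  simp [coord_of_lt h, E, eq_comm]

lemma sum_coord_E_mul {m : ℕ} (h : m < n) (Y : Fin n → ℝ) :
    ∑ i, coord n (E n i) m * Y i = coord n Y m := by
  simp [coord_E h, coord_of_lt h]

lemma coord_curvOp (T : (Fin n → ℝ) → (Fin n → ℝ) → (Fin n → ℝ) → (Fin n → ℝ) → ℝ)
    {m : ℕ} (h : m < n) (X Y Z : Fin n → ℝ) :
    coord n (curvOp n T X Y Z) m = T X Y Z (E n ⟨m, h⟩) :=
  coord_of_lt h _

end Basis

section Plane
variable {n : ℕ}

def planeMetric (n : ℕ) (X Y : Fin n → ℝ) : ℝ :=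
  coord n X 0 * coord n Y 0 + coord n X 1 * coord n Y 1

def planeSwap (n : ℕ) (X Y : Fin n → ℝ) : ℝ :=
  coord n X 0 * coord n Y 1 + coord n X 1 * coord n Y 0

def planeDiag (n : ℕ) (X Y : Fin n → ℝ) : ℝ :=
  coord n X 0 * coord n Y 0 - coord n X 1 * coord n Y 1

lemma A1_apply (h : 2 ≤ n) (a μ : ℝ) (X : Fin n → ℝ) (i : Fin n) :
    A1 n a μ X i = a * X i + μ * planeSwap n X (E n i) := by
  obtain ⟨_ | _ | i, hi⟩ := i <;>
    simp [A1, planeSwap, coord_E (show 0 < n by omega), coord_E (show 1 < n by omega),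
      coord_of_lt (show 0 < n by omega), coord_of_lt (show 1 < n by omega), add_comm]

lemma A2_apply (h : 2 ≤ n) (b μ : ℝ) (X : Fin n → ℝ) (i : Fin n) :
    A2 n b μ X i = b * X i + μ * planeDiag n X (E n i) := by
  obtain ⟨_ | _ | i, hi⟩ := i <;>
    simp [A2, planeDiag, coord_E (show 0 < n by omega), coord_E (show 1 < n by omega),
      coord_of_lt (show 0 < n by omega), coord_of_lt (show 1 < n by omega)] <;> ring

lemma gg_A1 (h : 2 ≤ n) (a μ : ℝ) (X Y : Fin n → ℝ) :
    gg n (A1 n a μ X) Y = a * gg n X Y + μ * planeSwap n X Y := by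
  simp only [gg, A1_apply h, planeSwap, add_mul, mul_add, Finset.sum_add_distrib, mul_assoc,
    ← Finset.mul_sum, sum_coord_E_mul (show 0 < n by omega), sum_coord_E_mul (show 1 < n by omega)]

lemma gg_A2 (h : 2 ≤ n) (b μ : ℝ) (X Y : Fin n → ℝ) :
    gg n (A2 n b μ X) Y = b * gg n X Y + μ * planeDiag n X Y := by
  simp only [gg, A2_apply h, planeDiag, add_mul, sub_mul, mul_sub, Finset.sum_add_distrib,
    Finset.sum_sub_distrib, mul_assoc, ← Finset.mul_sum, sum_coord_E_mul (show 0 < n by omega),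
    sum_coord_E_mul (show 1 < n by omega)]

lemma gg_A3 (c : ℝ) (X Y : Fin n → ℝ) : gg n (A3 n c X) Y = c * gg n X Y := by
  simp only [gg, A3, mul_assoc, ← Finset.mul_sum]

end Plane

section Curvature
variable {n : ℕ} {a b c μ k : ℝ}

lemma Rt_eq_KN (h : 2 ≤ n) :
    Rt n a b c μ k = ((a^2 + b^2 + c^2 + k) / 2) • KN n (gg n) (gg n)
      + (a * μ) • KN n (gg n) (planeSwap n) + (b * μ) • KN n (gg n) (planeDiag n)
      - μ^2 • KN n (planeMetric n) (planeMetric n) := by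
  funext X Y Z W
  simp only [Rt, gg_A1 h, gg_A2 h, gg_A3, Pi.add_apply, Pi.sub_apply, Pi.smul_apply, smul_eq_mul,
    KN, planeMetric, planeSwap, planeDiag]
  ring

lemma Ricc_eq (h : 2 ≤ n) (X Y : Fin n → ℝ) :
    Ricc n a b c μ k X Y = (a^2 + b^2 + c^2 + k) * ((n : ℝ) - 1) * gg n X Y
      + ((n : ℝ) - 2) * μ * (a * planeSwap n X Y + b * planeDiag n X Y)
      - 2 * μ^2 * planeMetric n X Y := by
  have h0 : 0 < n := by omega
  have h1 : 1 < n := by omega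
  have hYX : ∑ i, Y i * X i = gg n X Y := gg_comm Y X
  have hXY : ∑ i, X i * Y i = gg n X Y := rfl
  simp only [Ricc, Rt_eq_KN h, Pi.sub_apply, Pi.add_apply, Pi.smul_apply, KN, gg_E_right, E,
    ↓reduceIte, one_mul, mul_one, gg_E_left, smul_eq_mul, mul_sub, mul_add, planeSwap,
    coord_of_lt h0, coord_of_lt h1, mul_ite, mul_zero, ite_mul, zero_mul, planeDiag, planeMetric,
    add_mul, Finset.sum_sub_distrib, Finset.sum_add_distrib, Finset.sum_const, Finset.card_univ,
    Fintype.card_fin, nsmul_eq_mul, ← Finset.mul_sum, hYX, hXY, Finset.sum_ite_eq,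
    Finset.mem_univ, Fin.mk.injEq, one_ne_zero, zero_ne_one, add_zero, sub_self, zero_add, sub_mul]
  ring

lemma tau_eq (h : 2 ≤ n) :
    tau n a b c μ k = (a^2 + b^2 + c^2 + k) * n * ((n : ℝ) - 1) - 4 * μ^2 := by
  have h0 : 0 < n := by omega
  have h1 : 1 < n := by omega
  simp only [tau, Ricc_eq h, gg_E_left, E, ↓reduceIte, mul_one, planeSwap, coord_E h0, coord_E h1,
    mul_ite, mul_zero, planeDiag, planeMetric, Finset.sum_sub_distrib, Finset.sum_add_distrib,
    Finset.sum_const, Finset.card_univ, Fintype.card_fin, nsmul_eq_mul, ← Finset.mul_sum,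
    Finset.sum_ite_eq', Finset.mem_univ, Fin.mk.injEq, one_ne_zero, zero_ne_one, add_zero, sub_self]
  ring

/-- The Weyl tensor of `P ∧ P`, whose Ricci tensor is `2P` and scalar curvature `4`. -/
def weylPlane (n : ℕ) : (Fin n → ℝ) → (Fin n → ℝ) → (Fin n → ℝ) → (Fin n → ℝ) → ℝ :=
  KN n (planeMetric n) (planeMetric n) - (2 / ((n : ℝ) - 2)) • KN n (gg n) (planeMetric n)
    + (2 / (((n : ℝ) - 1) * ((n : ℝ) - 2))) • KN n (gg n) (gg n)

lemma Ct_eq_smul_weylPlane (h : 3 ≤ n) : Ct n a b c μ k = (-μ^2) • weylPlane n := by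
  have hn : (3 : ℝ) ≤ n := by exact_mod_cast h
  have hn2 : (n : ℝ) - 2 ≠ 0 := by linarith
  have hn1 : (n : ℝ) - 1 ≠ 0 := by linarith
  funext X Y Z W
  simp only [Ct, weylPlane, Rt_eq_KN (by omega : 2 ≤ n), Ricc_eq (by omega : 2 ≤ n),
    tau_eq (by omega : 2 ≤ n), KN, Pi.add_apply, Pi.sub_apply, Pi.smul_apply, smul_eq_mul]
  field_simp
  ring

lemma curvOp_Rt_eq_sum_wedge (X Y Z : Fin n → ℝ) :
    curvOp n (Rt n a b c μ k) X Y Z =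
      wedge n (gg n) (A1 n a μ X) (A1 n a μ Y) Z + wedge n (gg n) (A2 n b μ X) (A2 n b μ Y) Z
        + wedge n (gg n) (A3 n c X) (A3 n c Y) Z + k • wedge n (gg n) X Y Z := by
  funext j
  simp only [curvOp, Rt, wedge, gg_E_right, Pi.add_apply, Pi.smul_apply, smul_eq_mul]
  ring

lemma gg_curvOp_Rt (X Y Z W : Fin n → ℝ) :
    gg n (curvOp n (Rt n a b c μ k) X Y Z) W = Rt n a b c μ k X Y Z W := by
  simp only [curvOp_Rt_eq_sum_wedge, gg_add_left, gg_smul_left, gg_wedge_left, Rt]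
  ring

lemma derivForm_curvOp_gg (X Y : Fin n → ℝ) :
    derivForm (curvOp n (Rt n a b c μ k) X Y) (gg n) = 0 := by
  funext Z W
  simp only [derivForm, gg_curvOp_Rt, gg_comm Z, Rt, Pi.zero_apply]
  ring

lemma derivForm_wedge_gg (X Y : Fin n → ℝ) : derivForm (wedge n (gg n) X Y) (gg n) = 0 := by
  funext Z W
  simp only [derivForm, Pi.zero_apply]
  rw [gg_comm Z, gg_wedge_left, gg_wedge_left]
  ring

end Curvature

section Derivations
variable {n : ℕ} {a b c μ k : ℝ}

def RdotP (n : ℕ) (a b c μ k : ℝ) (X Y : Fin n → ℝ) : (Fin n → ℝ) → (Fin n → ℝ) → ℝ :=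
  derivForm (curvOp n (Rt n a b c μ k) X Y) (planeMetric n)

/-- `R(u, v, v, w) = mixedForm u w` for `u, w` in the plane and `v` a unit vector normal to it. -/
def mixedForm (n : ℕ) (a b c μ k : ℝ) (X Y : Fin n → ℝ) : ℝ :=
  (a^2 + b^2 + c^2 + k) * planeMetric n X Y + a * μ * planeSwap n X Y + b * μ * planeDiag n X Y

lemma RdotP_eq_mixedForm (h : 2 ≤ n) (X Y Z W : Fin n → ℝ) :
    RdotP n a b c μ k X Y Z W =
      -(mixedForm n a b c μ k X W * (gg n Y Z - planeMetric n Y Z)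
        + mixedForm n a b c μ k X Z * (gg n Y W - planeMetric n Y W)
        - mixedForm n a b c μ k Y W * (gg n X Z - planeMetric n X Z)
        - mixedForm n a b c μ k Y Z * (gg n X W - planeMetric n X W)) := by
  have h0 : 0 < n := by omega
  have h1 : 1 < n := by omega
  simp only [RdotP, derivForm, planeMetric, coord_curvOp _ h0, coord_curvOp _ h1, Rt_eq_KN h, KN,
    Pi.add_apply, Pi.sub_apply, Pi.smul_apply, smul_eq_mul, gg_E_right, planeSwap, planeDiag,
    mixedForm, coord_of_lt h0, coord_of_lt h1, E, Fin.mk.injEq, zero_ne_one, one_ne_zero,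
    ↓reduceIte]
  ring

lemma RC_eq_KN_RdotP (h : 3 ≤ n) (X1 X2 X3 X4 X Y : Fin n → ℝ) :
    RC n a b c μ k X1 X2 X3 X4 X Y =
      -2 * μ^2 * (KN n (RdotP n a b c μ k X Y) (planeMetric n) X1 X2 X3 X4
        - KN n (gg n) (RdotP n a b c μ k X Y) X1 X2 X3 X4 / ((n : ℝ) - 2)) := by
  simp only [RC, Ct_eq_smul_weylPlane h, weylPlane, dotT_smul, dotT_add, dotT_sub, dotT_KN,
    derivForm_curvOp_gg, Pi.smul_apply, Pi.add_apply, Pi.sub_apply, smul_eq_mul, KN,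
    Pi.zero_apply, RdotP]
  ring

lemma Q_gg_Rt_eq (h : 2 ≤ n) (X1 X2 X3 X4 X Y : Fin n → ℝ) :
    Q n (gg n) (Rt n a b c μ k) X1 X2 X3 X4 X Y =
      a * μ * KN n (gg n) (derivForm (wedge n (gg n) X Y) (planeSwap n)) X1 X2 X3 X4
        + b * μ * KN n (gg n) (derivForm (wedge n (gg n) X Y) (planeDiag n)) X1 X2 X3 X4
        - 2 * μ^2 * KN n (derivForm (wedge n (gg n) X Y) (planeMetric n)) (planeMetric n)
            X1 X2 X3 X4 := by
  simp only [Q, Rt_eq_KN h, dotT_smul, dotT_add, dotT_sub, dotT_KN, derivForm_wedge_gg,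
    Pi.smul_apply, Pi.add_apply, Pi.sub_apply, smul_eq_mul, KN, Pi.zero_apply]
  ring

lemma RC_eq_zero (h : 3 ≤ n) (hcase : μ = 0 ∨ (a = 0 ∧ b = 0 ∧ c ^ 2 + k = 0))
    (X1 X2 X3 X4 X Y : Fin n → ℝ) : RC n a b c μ k X1 X2 X3 X4 X Y = 0 := by
  rw [RC_eq_KN_RdotP h]
  rcases hcase with hμ | ⟨ha, hb, hck⟩
  · rw [hμ]
    ring
  · have hRP : RdotP n a b c μ k X Y = 0 := by
      funext Z W
      simp [RdotP_eq_mixedForm (by omega : 2 ≤ n), mixedForm, ha, hb, hck]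
    simp [hRP, KN]

lemma eq_zero_of_RC_eq_smul_Q (h : 4 ≤ n) (hμ : μ ≠ 0) (L : ℝ)
    (hL : ∀ X1 X2 X3 X4 X Y : Fin n → ℝ,
      RC n a b c μ k X1 X2 X3 X4 X Y = L * Q n (gg n) (Rt n a b c μ k) X1 X2 X3 X4 X Y) :
    a = 0 ∧ b = 0 ∧ c ^ 2 + k = 0 := by
  have h0 : 0 < n := by omega
  have h1 : 1 < n := by omega
  have h2 : 2 < n := by omega
  have h3 : 3 < n := by omega
  have q1 := hL (E n ⟨1, h1⟩) (E n ⟨0, h0⟩) (E n ⟨0, h0⟩) (E n ⟨2, h2⟩) (E n ⟨0, h0⟩) (E n ⟨2, h2⟩)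
  have q2 := hL (E n ⟨1, h1⟩) (E n ⟨3, h3⟩) (E n ⟨3, h3⟩) (E n ⟨2, h2⟩) (E n ⟨0, h0⟩) (E n ⟨2, h2⟩)
  have q3 := hL (E n ⟨0, h0⟩) (E n ⟨3, h3⟩) (E n ⟨3, h3⟩) (E n ⟨2, h2⟩) (E n ⟨0, h0⟩) (E n ⟨2, h2⟩)
  have q4 := hL (E n ⟨0, h0⟩) (E n ⟨1, h1⟩) (E n ⟨1, h1⟩) (E n ⟨2, h2⟩) (E n ⟨0, h0⟩) (E n ⟨2, h2⟩)
  have q5 := hL (E n ⟨1, h1⟩) (E n ⟨3, h3⟩) (E n ⟨3, h3⟩) (E n ⟨2, h2⟩) (E n ⟨1, h1⟩) (E n ⟨2, h2⟩)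
  have q6 := hL (E n ⟨1, h1⟩) (E n ⟨0, h0⟩) (E n ⟨0, h0⟩) (E n ⟨2, h2⟩) (E n ⟨1, h1⟩) (E n ⟨2, h2⟩)
  simp only [RC_eq_KN_RdotP (by omega : 3 ≤ n), Q_gg_Rt_eq (by omega : 2 ≤ n),
    RdotP_eq_mixedForm (by omega : 2 ≤ n), mixedForm, KN, derivForm, wedge, planeMetric, planeSwap,
    planeDiag, gg_E_right, E, coord_of_lt h0, coord_of_lt h1, Fin.mk.injEq] at q1 q2 q3 q4 q5 q6
  norm_num at q1 q2 q3 q4 q5 q6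
  have ha : a = 0 := by
    have : a * μ ^ 3 = 0 := by linear_combination (-1 / 2 : ℝ) * (q1 + q2)
    simpa [hμ] using this
  have hL₀ : μ ^ 2 * (L - (a ^ 2 + b ^ 2 + c ^ 2 + k + b * μ)) = 0 := by
    linear_combination (1 / 2 : ℝ) * (q3 - q4)
  have hL₁ : μ ^ 2 * (L - (a ^ 2 + b ^ 2 + c ^ 2 + k - b * μ)) = 0 := by
    linear_combination (1 / 2 : ℝ) * (q5 - q6)
  have hb : b = 0 := by
    have : b * μ ^ 3 = 0 := by linear_combination (1 / 2 : ℝ) * (hL₁ - hL₀)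
    simpa [hμ] using this
  subst ha hb
  refine ⟨rfl, rfl, ?_⟩
  have : (c ^ 2 + k) * μ ^ 2 / ((n : ℝ) - 2) = 0 := by linear_combination (-1 / 2 : ℝ) * q3
  simpa [hμ, sub_eq_zero, show (n : ℝ) ≠ 2 by norm_cast; omega] using this

end Derivations

/-- `R·C` and `Q(g,R)` are linearly dependent iff `μ = 0`, or
`a = 0`, `b = 0` and `c² + k̃ = 0`, in which latter case `R·C = 0`;
in particular if `k̃ > 0` this is equivalent to `μ = 0`. -/
theorem statement_7 (n : ℕ) (hn : 4 ≤ n) (a b c μ k : ℝ) :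
    ((∃ L : ℝ, ∀ X1 X2 X3 X4 X Y : Fin n → ℝ,
        RC n a b c μ k X1 X2 X3 X4 X Y
          = L * Q n (gg n) (Rt n a b c μ k) X1 X2 X3 X4 X Y)
      ↔ (μ = 0 ∨ (a = 0 ∧ b = 0 ∧ c ^ 2 + k = 0)))
    ∧ ((a = 0 ∧ b = 0 ∧ c ^ 2 + k = 0) →
        ∀ X1 X2 X3 X4 X Y : Fin n → ℝ, RC n a b c μ k X1 X2 X3 X4 X Y = 0)
    ∧ (0 < k →
      ((∃ L : ℝ, ∀ X1 X2 X3 X4 X Y : Fin n → ℝ,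
          RC n a b c μ k X1 X2 X3 X4 X Y
            = L * Q n (gg n) (Rt n a b c μ k) X1 X2 X3 X4 X Y) ↔ μ = 0)) := by
  have h3 : 3 ≤ n := by omega
  have dependent_iff : (∃ L : ℝ, ∀ X1 X2 X3 X4 X Y : Fin n → ℝ,
      RC n a b c μ k X1 X2 X3 X4 X Y = L * Q n (gg n) (Rt n a b c μ k) X1 X2 X3 X4 X Y)
      ↔ (μ = 0 ∨ (a = 0 ∧ b = 0 ∧ c ^ 2 + k = 0)) := by
    refine ⟨fun ⟨L, hL⟩ => or_iff_not_imp_left.mpr fun hμ => eq_zero_of_RC_eq_smul_Q hn hμ L hL,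
      fun hcase => ⟨0, fun X1 X2 X3 X4 X Y => ?_⟩⟩
    rw [RC_eq_zero h3 hcase, zero_mul]
  refine ⟨dependent_iff, fun hcase => RC_eq_zero h3 (Or.inr hcase),
    fun hk => dependent_iff.trans ⟨?_, Or.inl⟩⟩
  rintro (hμ | ⟨-, -, hck⟩)
  · exact hμ
  · nlinarith [sq_nonneg c]

end Wintgen
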